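/- For all simple regular expressions E₁, E₂ over an alphabet α and every nonempty word w over α: ∂_w(E₁)⊙E₂ ⊆ ∂_w(E₁·E₂) ⊆ (∂_w(E₁)⊙E₂) ∪ ⋃_{v} ∂_v(E₂), where v ranges over the nonempty suffixes of w and 𝒮⊙F = {G·F | G ∈ 𝒮}. -/

import Mathlib

open scoped Classical

/-- The Antimirov partial derivative of a regular expression with respect to a symbol. -/
noncomputable def aderiv {α : Type*} (a : α) : RegularExpression α → Set (RegularExpression α)
  | .zero => ∅
  | .epsilon => ∅
  | .char b => if b = a then {1} else ∅
  | .plus E₁ E₂ => aderiv a E₁ ∪ aderiv a E₂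
  | .comp E₁ E₂ =>
      if [] ∈ E₁.matches' then ((· * E₂) '' aderiv a E₁) ∪ aderiv a E₂
      else (· * E₂) '' aderiv a E₁
  | .star E₁ => (· * E₁.star) '' aderiv a E₁

/-- Iterated Antimirov partial derivative with respect to a word. -/
noncomputable def aderivWord {α : Type*} : List α → RegularExpression α → Set (RegularExpression α)
  | [], E => {E}
  | a :: w, E => ⋃ F ∈ aderiv a E, aderivWord w F

/-- Left quotient of a language by a word. -/
def lquot {α : Type*} (w : List α) (L : Language α) : Language α := {v | w ++ v ∈ L}

/-! Both bounds hold for every word, the empty one included, and follow by induction on the word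
with `E₁` generalized: a derivative of `E₁ * E₂` by a symbol is either `F * E₂` with `F` a
derivative of `E₁`, which the induction hypothesis handles, or a derivative of `E₂`, after which
the rest of the word is read by `E₂` alone. -/

namespace RegularExpression

variable {α : Type*} {a : α} {w : List α} {E F : RegularExpression α}

lemma aderiv_mul (a : α) (E₁ E₂ : RegularExpression α) :
    aderiv a (E₁ * E₂) =
      if [] ∈ E₁.matches' then ((· * E₂) '' aderiv a E₁) ∪ aderiv a E₂
      else (· * E₂) '' aderiv a E₁ :=
  rfl

lemma image_mul_aderiv_subset_aderiv_mul (a : α) (E₁ E₂ : RegularExpression α) :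
    (· * E₂) '' aderiv a E₁ ⊆ aderiv a (E₁ * E₂) := by
  rw [aderiv_mul]
  split_ifs
  exacts [Set.subset_union_left, subset_rfl]

lemma aderiv_mul_subset (a : α) (E₁ E₂ : RegularExpression α) :
    aderiv a (E₁ * E₂) ⊆ (· * E₂) '' aderiv a E₁ ∪ aderiv a E₂ := by
  rw [aderiv_mul]
  split_ifs
  exacts [subset_rfl, Set.subset_union_left]

lemma mem_aderivWord_cons {G : RegularExpression α} :
    G ∈ aderivWord (a :: w) E ↔ ∃ F ∈ aderiv a E, G ∈ aderivWord w F := by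
  simp [aderivWord]

lemma aderivWord_subset_aderivWord_cons (hF : F ∈ aderiv a E) :
    aderivWord w F ⊆ aderivWord (a :: w) E :=
  Set.subset_biUnion_of_mem (u := fun F => aderivWord w F) hF

lemma image_mul_aderivWord_subset (w : List α) (E₁ E₂ : RegularExpression α) :
    (· * E₂) '' aderivWord w E₁ ⊆ aderivWord w (E₁ * E₂) := by
  induction w generalizing E₁ with
  | nil => simp [aderivWord]
  | cons a w ih =>
    rintro _ ⟨F', hF', rfl⟩
    obtain ⟨F, hF, hF'⟩ := mem_aderivWord_cons.1 hF'
    exact mem_aderivWord_cons.2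
      ⟨F * E₂, image_mul_aderiv_subset_aderiv_mul a E₁ E₂ ⟨F, hF, rfl⟩, ih F ⟨F', hF', rfl⟩⟩

lemma aderivWord_mul_subset (w : List α) (E₁ E₂ : RegularExpression α) :
    aderivWord w (E₁ * E₂) ⊆
      ((· * E₂) '' aderivWord w E₁) ∪ ⋃ v ∈ {v : List α | v ≠ [] ∧ v <:+ w}, aderivWord v E₂ := by
  induction w generalizing E₁ with
  | nil => simp [aderivWord]
  | cons a w ih =>
    intro G hG
    obtain ⟨H, hH, hG⟩ := mem_aderivWord_cons.1 hG
    rcases aderiv_mul_subset a E₁ E₂ hH with ⟨F, hF, rfl⟩ | hH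
    · rcases ih F hG with ⟨F', hF', rfl⟩ | hG
      · exact Or.inl ⟨F', aderivWord_subset_aderivWord_cons hF hF', rfl⟩
      · refine Or.inr (Set.biUnion_subset_biUnion_left ?_ hG)
        exact fun v ⟨hv, hsuffix⟩ => ⟨hv, hsuffix.trans (List.suffix_cons a w)⟩
    · exact Or.inr <| Set.mem_biUnion (x := a :: w) (by simp)
        (aderivWord_subset_aderivWord_cons hH hG)

end RegularExpression

theorem antimirov_comp_bounds {α : Type*} (E₁ E₂ : RegularExpression α) (a : α) (w : List α) :
    (· * E₂) '' aderivWord (a :: w) E₁ ⊆ aderivWord (a :: w) (E₁ * E₂) ∧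
      aderivWord (a :: w) (E₁ * E₂) ⊆
        ((· * E₂) '' aderivWord (a :: w) E₁) ∪
          ⋃ v ∈ {v : List α | v ≠ [] ∧ v <:+ a :: w}, aderivWord v E₂ :=
  ⟨RegularExpression.image_mul_aderivWord_subset (a :: w) E₁ E₂,
    RegularExpression.aderivWord_mul_subset (a :: w) E₁ E₂⟩
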